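/- Let T be a finite set of pairs ⟨t | Conj⟩ with t a real constant and Conj a finite conjunction of ground atoms, let f ∈ {sum, times, min, max, count} be a classical aggregate function, and let S = {⟨t : [1,1] | Conj:[1,1]⟩ : ⟨t | Conj⟩ ∈ T} be the probability set in which every conjunct is annotated with [1,1]. For I ⊆ B_L, let h_I be the p-interpretation with h_I(a) = [1,1] if a ∈ I and h_I(a) = [0,0] otherwise, and let T_I = {{t : ⟨t | Conj⟩ ∈ T and every atom of Conj is in I}}. Then S_{h_I} = {{t : [1,1] : t ∈ T_I}}; consequently, whenever f(T_I) is defined, f_P(S_{h_I}) = (f(T_I), [1,1]), and f_P(S_{h_I}) = ⊥ exactly when f(T_I) is undefined; hence for any constant w and comparison ≺ ∈ {=, ≠, <, >, ≤, ≥}, h_I satisfies the probability aggregate atom f_P(S) ≺ w : [1,1] if and only if I satisfies the classical aggregate atom f(T) ≺ w, and h_I satisfies not f_P(S) ≺ w : [1,1] if and only if I does not satisfy f(T) ≺ w. -/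

import Mathlib

open scoped Classical

noncomputable section

/-- `C[0,1]`: closed subintervals `[lo, hi]` of `[0,1]`, encoded as pairs of reals. -/
def PInterval : Type := {p : ℝ × ℝ // 0 ≤ p.1 ∧ p.1 ≤ p.2 ∧ p.2 ≤ 1}

/-- The truth order on raw pairs of reals (componentwise `≤`). -/
def tleP (x y : ℝ × ℝ) : Prop := x.1 ≤ y.1 ∧ x.2 ≤ y.2

/-- The truth order `≤_t` on `C[0,1]`. -/
def tle (x y : PInterval) : Prop := tleP x.val y.val

/-- The interval `[0,0]`. -/
def zeroI : PInterval := ⟨(0, 0), by norm_num⟩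

/-- The interval `[1,1]`. -/
def oneI : PInterval := ⟨(1, 1), by norm_num⟩

/-- Comparison operators `≺ ∈ {=, ≠, <, >, ≤, ≥}`. -/
inductive CmpOp | eq | ne | lt | gt | le | ge

/-- Evaluation of a comparison operator on reals. -/
def CmpOp.evalR : CmpOp → ℝ → ℝ → Prop
  | .eq, x, y => x = y
  | .ne, x, y => x ≠ y
  | .lt, x, y => x < y
  | .gt, x, y => x > y
  | .le, x, y => x ≤ y
  | .ge, x, y => x ≥ y

/-- Minimum of a list of reals (undefined, i.e. `none`, on the empty list). -/
def listMin : List ℝ → Option ℝ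
  | [] => none
  | x :: xs => some (xs.foldl min x)

/-- Maximum of a list of reals (undefined, i.e. `none`, on the empty list). -/
def listMax : List ℝ → Option ℝ
  | [] => none
  | x :: xs => some (xs.foldl max x)

/-- Classical aggregate functions `{sum, times, min, max, count}`. -/
inductive AggF | sum | times | min | max | count

/-- Classical aggregate on a multiset of reals; `min` and `max` are undefined on the
empty multiset, `sum ∅ = 0`, `times ∅ = 1`, `count ∅ = 0`. -/
def AggF.evalC : AggF → Multiset ℝ → Option ℝ
  | .sum, s => some s.sum
  | .times, s => some s.prod
  | .min, s => listMin s.toList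
  | .max, s => listMax s.toList
  | .count, s => some (Multiset.card s)

variable {Atom : Type}

/-- An element `⟨F : [P₁,P₂] | C⟩` of a ground probability set: a real constant `F`,
a probability annotation and a finite conjunction of probability annotated atoms. -/
structure PSetElem (Atom : Type) where
  F : ℝ
  ann : PInterval
  C : List (Atom × PInterval)

/-- The multiset `S_h = {{F : [P₁,P₂] : ⟨F : [P₁,P₂] | C⟩ ∈ S and μ ≤_t h(A) for
every conjunct A:μ of C}}`. -/
def groundSet (h : Atom → PInterval) (S : Finset (PSetElem Atom)) :
    Multiset (ℝ × PInterval) :=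
  (S.val.filter fun e => ∀ p ∈ e.C, tle p.2 (h p.1)).map fun e => (e.F, e.ann)

/-- `X`, the componentwise product of the probability annotations of the multiset
(the product of the empty multiset of intervals is `[1,1]`). -/
def aggX (s : Multiset (ℝ × PInterval)) : ℝ × ℝ :=
  ((s.map fun e => e.2.val.1).prod, (s.map fun e => e.2.val.2).prod)

/-- Evaluation of the probability aggregate `f_P` on `S_h`:
`(f applied to the F-values of S_h, Π of the annotations of S_h)` if `f` is defined
on that multiset, and `⊥` (i.e. `none`) otherwise. -/
def AggF.evalP (f : AggF) (s : Multiset (ℝ × PInterval)) : Option (ℝ × (ℝ × ℝ)) :=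
  (f.evalC (s.map Prod.fst)).map fun x => (x, aggX s)

/-- `h` satisfies `f_P(S) ≺ w : μ` iff `f_P(S_h) = (x,ν) ≠ ⊥` with `x ≺ w` and
`μ ≤_t ν`. -/
def satPosAgg (h : Atom → PInterval) (f : AggF) (S : Finset (PSetElem Atom))
    (op : CmpOp) (w : ℝ) (μ : PInterval) : Prop :=
  ∃ x ν, f.evalP (groundSet h S) = some (x, ν) ∧ op.evalR x w ∧ tleP μ.val ν

/-- `h` satisfies `not f_P(S) ≺ w : μ` iff `f_P(S_h) = ⊥`, or `f_P(S_h) = (x,ν)`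
with `x ⊀ w` or `μ ≰_t ν`. -/
def satNegAgg (h : Atom → PInterval) (f : AggF) (S : Finset (PSetElem Atom))
    (op : CmpOp) (w : ℝ) (μ : PInterval) : Prop :=
  f.evalP (groundSet h S) = none ∨
    ∃ x ν, f.evalP (groundSet h S) = some (x, ν) ∧ (¬ op.evalR x w ∨ ¬ tleP μ.val ν)

/-- `T_I = {{t : ⟨t | Conj⟩ ∈ T and every atom of Conj is in I}}`. -/
def TI (I : Set Atom) (T : Finset (ℝ × List Atom)) : Multiset ℝ :=
  (T.val.filter fun p => ∀ a ∈ p.2, a ∈ I).map Prod.fst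

/-- `I` satisfies the classical aggregate atom `f(T) ≺ w` iff `f(T_I)` is defined
and `f(T_I) ≺ w`. -/
def cSatAgg (I : Set Atom) (f : AggF) (T : Finset (ℝ × List Atom))
    (op : CmpOp) (w : ℝ) : Prop :=
  ∃ x, f.evalC (TI I T) = some x ∧ op.evalR x w

/-- The probability set `S = {⟨t : [1,1] | Conj:[1,1]⟩ : ⟨t | Conj⟩ ∈ T}` in which
every value and every conjunct is annotated with `[1,1]`. -/
def transSet (T : Finset (ℝ × List Atom)) : Finset (PSetElem Atom) :=
  T.image fun p => ⟨p.1, oneI, p.2.map fun a => (a, oneI)⟩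

/-- The p-interpretation `h_I` with `h_I(a) = [1,1]` if `a ∈ I` and `h_I(a) = [0,0]`
otherwise. -/
def hI (I : Set Atom) (a : Atom) : PInterval :=
  if a ∈ I then oneI else zeroI

/-- Let `T` be a finite set of pairs `⟨t | Conj⟩`, `f` a classical
aggregate function, and `S` the probability set annotating everything with `[1,1]`.
Then `S_{h_I} = {{t : [1,1] : t ∈ T_I}}`; whenever `f(T_I)` is defined,
`f_P(S_{h_I}) = (f(T_I), [1,1])`, and `f_P(S_{h_I}) = ⊥` exactly when `f(T_I)` is
undefined; hence for any constant `w` and comparison `≺`, `h_I` satisfies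
`f_P(S) ≺ w : [1,1]` iff `I` satisfies `f(T) ≺ w`, and `h_I` satisfies
`not f_P(S) ≺ w : [1,1]` iff `I` does not satisfy `f(T) ≺ w`. -/
theorem aggregate_translation_correct (T : Finset (ℝ × List Atom)) (f : AggF)
    (I : Set Atom) (op : CmpOp) (w : ℝ) :
    groundSet (hI I) (transSet T) = (TI I T).map (fun t => (t, oneI)) ∧
    (∀ x : ℝ, f.evalC (TI I T) = some x →
      f.evalP (groundSet (hI I) (transSet T)) = some (x, ((1 : ℝ), (1 : ℝ)))) ∧
    (f.evalP (groundSet (hI I) (transSet T)) = none ↔ f.evalC (TI I T) = none) ∧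
    (satPosAgg (hI I) f (transSet T) op w oneI ↔ cSatAgg I f T op w) ∧
    (satNegAgg (hI I) f (transSet T) op w oneI ↔ ¬ cSatAgg I f T op w) := by
  classical
  set g : ℝ × List Atom → PSetElem Atom :=
    fun p => ⟨p.1, oneI, p.2.map fun a => (a, oneI)⟩ with hg
  have hinj : Function.Injective g := by
    intro p q h
    simp only [hg, PSetElem.mk.injEq] at h
    refine Prod.ext h.1 ?_
    have hinj2 : Function.Injective (fun a : Atom => (a, oneI)) :=
      fun a b hab => congrArg Prod.fst hab
    exact List.map_injective_iff.2 hinj2 h.2.2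
  have hval : (transSet T).val = T.val.map g := by
    rw [transSet, Finset.image_val, Multiset.dedup_eq_self.2]
    exact Multiset.Nodup.map hinj T.nodup
  have htle : ∀ a : Atom, tle oneI (hI I a) ↔ a ∈ I := by
    intro a
    by_cases ha : a ∈ I
    · rw [hI, if_pos ha]; norm_num [ha, tle, tleP, oneI]
    · rw [hI, if_neg ha]; norm_num [ha, tle, tleP, oneI, zeroI]
  have hpred : ∀ p ∈ T.val,
      ((fun e : PSetElem Atom => ∀ q ∈ e.C, tle q.2 (hI I q.1)) ∘ g) p ↔
        (fun p : ℝ × List Atom => ∀ a ∈ p.2, a ∈ I) p := by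
    intro p _
    constructor
    · intro h a ha
      exact (htle a).1 (by simpa [hg] using h (a, oneI) (by simp [hg, ha]))
    · intro h q hq
      simp only [hg, List.mem_map] at hq
      obtain ⟨a, ha, rfl⟩ := hq
      exact (htle a).2 (h a ha)
  have key : groundSet (hI I) (transSet T) = (TI I T).map (fun t => (t, oneI)) := by
    rw [groundSet, hval, Multiset.filter_map, Multiset.map_map, TI, Multiset.map_map,
      Multiset.filter_congr hpred]
    simp [hg]
  have hfst : (groundSet (hI I) (transSet T)).map Prod.fst = TI I T := by
    rw [key, Multiset.map_map]; simp
  have hX : aggX (groundSet (hI I) (transSet T)) = ((1 : ℝ), (1 : ℝ)) := by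
    rw [key, aggX, Multiset.map_map, Multiset.map_map]
    simp [oneI]
  have hone : tleP oneI.val ((1 : ℝ), (1 : ℝ)) := by
    simp [tleP, oneI]
  have hsome : ∀ x : ℝ, f.evalC (TI I T) = some x →
      f.evalP (groundSet (hI I) (transSet T)) = some (x, ((1 : ℝ), (1 : ℝ))) := by
    intro x hx
    simp [AggF.evalP, hfst, hx, hX]
  refine ⟨key, hsome, ?_, ?_, ?_⟩
  · simp [AggF.evalP, hfst]
  · constructor
    · rintro ⟨x', ν, hx', hop, -⟩
      rcases h : f.evalC (TI I T) with _ | x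
      · simp [AggF.evalP, hfst, h] at hx'
      · rw [hsome x h] at hx'
        simp only [Option.some.injEq, Prod.mk.injEq] at hx'
        obtain ⟨rfl, -⟩ := hx'
        exact ⟨x, h, hop⟩
    · rintro ⟨x, hx, hop⟩
      exact ⟨x, ((1 : ℝ), (1 : ℝ)), hsome x hx, hop, hone⟩
  · constructor
    · rintro (hnone | ⟨x', ν, hx', hbad⟩) ⟨x, hx, hop⟩
      · rw [hsome x hx] at hnone; exact Option.some_ne_none _ hnone
      · rw [hsome x hx] at hx'
        simp only [Option.some.injEq, Prod.mk.injEq] at hx'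
        obtain ⟨rfl, rfl⟩ := hx'
        rcases hbad with hbad | hbad
        · exact hbad hop
        · exact hbad hone
    · intro hc
      rcases h : f.evalC (TI I T) with _ | x
      · left; simp [AggF.evalP, hfst, h]
      · exact Or.inr ⟨x, ((1 : ℝ), (1 : ℝ)), hsome x h,
          Or.inl fun hop => hc ⟨x, h, hop⟩⟩
end
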